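/- arXiv:2104.13642 — 3 statements merged into one kernel-verified Lean document; each statement's English description precedes it below -/
import Mathlib

section
/- Let (M, d) be a metric space, μ a Borel probability measure on M, f : M → ℝ^m Borel measurable, μ_f = f_*μ, and q ≥ 2 an integer. Suppose the generalized dimension of order q of the image measure exists, i.e. D_q^f := lim_{r→0} [ log ∫_{ℝ^m} μ_f(B(y,r))^{q-1} dμ_f(y) ] / [ (q-1) log r ] exists and is finite. Then lim_{r→0} [ log μ^⊗q( { (x₁,…,x_q) ∈ M^q : max_{j=2,…,q} d(f(x_j), f(x₁)) ≤ r } ) ] / log r = (q-1) D_q^f. -/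
open MeasureTheory Set Filter Topology Metric

/-- Positivity of the correlation integral: for a probability measure on a second countable
metric space, the integral of the `n`-th power of ball measures is positive. -/
lemma Cpos_aux {E : Type*} [MetricSpace E] [MeasurableSpace E] [BorelSpace E]
    [SecondCountableTopology E]
    (ν : Measure E) [IsProbabilityMeasure ν] (n : ℕ) {r : ℝ} (hr : 0 < r) :
    0 < ∫⁻ y, (ν (ball y r)) ^ n ∂ν := by
  have hmb : Measurable (fun y : E => ν (ball y r)) := by
    have hs : MeasurableSet {p : E × E | dist p.2 p.1 < r} :=
      measurableSet_lt (measurable_snd.dist measurable_fst) measurable_const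
    exact measurable_measure_prodMk_left hs
  have hA : ν {y : E | ν (ball y r) = 0} = 0 := by
    apply measure_null_of_locally_null
    intro y hy
    exact ⟨{y : E | ν (ball y r) = 0} ∩ ball y r,
      inter_mem_nhdsWithin _ (ball_mem_nhds y hr),
      measure_mono_null (inter_subset_right) hy⟩
  rw [lintegral_pos_iff_support (hmb.pow_const n)]
  have hsub : {y : E | ν (ball y r) = 0}ᶜ ⊆ Function.support fun y => (ν (ball y r)) ^ n :=
    fun y hy => pow_ne_zero n hy
  calc (0:ENNReal) < ν {y : E | ν (ball y r) = 0}ᶜ := by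
        have hms : MeasurableSet {y : E | ν (ball y r) = 0} :=
          hmb (measurableSet_singleton 0)
        rw [measure_compl hms (measure_ne_top _ _), hA]
        simp
    _ ≤ ν (Function.support fun y => (ν (ball y r)) ^ n) := measure_mono hsub

/-- The key Fubini identity: the product measure of the matching set equals the
integral of the `n`-th power of closed-ball measures of the image measure. -/
lemma matching_set_eq_integral {M : Type*} [MetricSpace M] [MeasurableSpace M] [BorelSpace M]
    (μ : Measure M) [IsProbabilityMeasure μ]
    {m : ℕ} (f : M → EuclideanSpace ℝ (Fin m)) (hf : Measurable f)
    (n : ℕ) (r : ℝ) :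
    (Measure.pi fun _ : Fin (n+1) => μ)
        {x : Fin (n+1) → M | ∀ j : Fin (n+1), j ≠ ⟨0, Nat.succ_pos n⟩ →
          dist (f (x j)) (f (x ⟨0, Nat.succ_pos n⟩)) ≤ r}
      = ∫⁻ y, ((μ.map f) (closedBall y r)) ^ n ∂(μ.map f) := by
  have h0 : (⟨0, Nat.succ_pos n⟩ : Fin (n+1)) = 0 := rfl
  set B : Set (M × (Fin n → M)) := {p | ∀ j : Fin n, dist (f (p.2 j)) (f p.1) ≤ r} with hBdef
  have hB : MeasurableSet B := by
    have : B = ⋂ j : Fin n, {p : M × (Fin n → M) | dist (f (p.2 j)) (f p.1) ≤ r} := by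
      ext p; simp [hBdef]
    rw [this]
    exact MeasurableSet.iInter fun j =>
      measurableSet_le ((hf.comp ((measurable_pi_apply j).comp measurable_snd)).dist
        (hf.comp measurable_fst)) measurable_const
  have hp := measurePreserving_piFinSuccAbove (fun _ : Fin (n+1) => μ) 0
  have hpre : (MeasurableEquiv.piFinSuccAbove (fun _ : Fin (n+1) => M) 0) ⁻¹' B
      = {x : Fin (n+1) → M | ∀ j : Fin (n+1), j ≠ ⟨0, Nat.succ_pos n⟩ →
          dist (f (x j)) (f (x ⟨0, Nat.succ_pos n⟩)) ≤ r} := by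
    ext x
    simp only [Set.mem_preimage, Set.mem_setOf_eq, hBdef, h0,
      MeasurableEquiv.piFinSuccAbove_apply, Fin.removeNth]
    constructor
    · intro h j hj
      obtain ⟨k, rfl⟩ := Fin.exists_succAbove_eq hj
      exact h k
    · intro h k
      exact h _ (Fin.succAbove_ne 0 k)
  rw [← hpre, hp.measure_preimage hB.nullMeasurableSet, Measure.prod_apply hB]
  have hfiber : ∀ x₀ : M, (Prod.mk x₀ ⁻¹' B) =
      Set.pi Set.univ (fun _ : Fin n => f ⁻¹' closedBall (f x₀) r) := by
    intro x₀; ext z; simp [hBdef, dist_comm]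
  have hcb : Measurable (fun y => (μ.map f) (closedBall y r)) := by
    have : MeasurableSet {p : EuclideanSpace ℝ (Fin m) × EuclideanSpace ℝ (Fin m) |
        p.2 ∈ closedBall p.1 r} :=
      measurableSet_le (measurable_snd.dist measurable_fst) measurable_const
    exact measurable_measure_prodMk_left this
  calc ∫⁻ x₀, (Measure.pi fun _ : Fin n => μ) (Prod.mk x₀ ⁻¹' B) ∂μ
      = ∫⁻ x₀, ((μ.map f) (closedBall (f x₀) r)) ^ n ∂μ := by
        refine lintegral_congr fun x₀ => ?_
        rw [hfiber, Measure.pi_pi, Measure.map_apply hf measurableSet_closedBall]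
        simp
    _ = ∫⁻ y, ((μ.map f) (closedBall y r)) ^ n ∂(μ.map f) := by
        rw [lintegral_map (hcb.pow_const n) hf]

/-- The analytic squeeze argument. -/
lemma squeeze_aux (c : ℝ) (hc : 0 < c) (C T : ℝ → ENNReal) (D : ℝ)
    (hCpos : ∀ r : ℝ, 0 < r → 0 < C r)
    (hC1 : ∀ r : ℝ, C r ≤ 1)
    (hT1 : ∀ r : ℝ, T r ≤ 1)
    (hCT : ∀ r : ℝ, 0 < r → C r ≤ T r)
    (hTC : ∀ r : ℝ, 0 < r → T r ≤ C (2*r))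
    (hD : Tendsto (fun r : ℝ => Real.log (C r).toReal / (c * Real.log r)) (𝓝[>] 0) (𝓝 D)) :
    Tendsto (fun r : ℝ => Real.log (T r).toReal / Real.log r) (𝓝[>] 0) (𝓝 (c * D)) := by
  have hCtop : ∀ r : ℝ, C r ≠ ⊤ := fun r => ne_top_of_le_ne_top ENNReal.one_ne_top (hC1 r)
  have hTtop : ∀ r : ℝ, T r ≠ ⊤ := fun r => ne_top_of_le_ne_top ENNReal.one_ne_top (hT1 r)
  have hmem : Ioo (0:ℝ) (1/2) ∈ 𝓝[>] (0:ℝ) := Ioo_mem_nhdsGT (by norm_num)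
  -- Upper bound function
  set U : ℝ → ℝ := fun r => c * (Real.log (C r).toReal / (c * Real.log r)) with hUdef
  have hU : Tendsto U (𝓝[>] 0) (𝓝 (c * D)) := hD.const_mul c
  -- map r ↦ 2r
  have h2r : Tendsto (fun r : ℝ => 2*r) (𝓝[>] 0) (𝓝[>] 0) := by
    apply tendsto_nhdsWithin_of_tendsto_nhds_of_eventually_within
    · have : Tendsto (fun r : ℝ => 2*r) (𝓝 0) (𝓝 (2*0)) :=
        (continuous_const.mul continuous_id).tendsto 0
      simpa using this.mono_left nhdsWithin_le_nhds
    · filter_upwards [self_mem_nhdsWithin] with r (hr : 0 < r)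
      exact mem_Ioi.2 (by linarith)
  -- second factor tends to c
  have hloginv : Tendsto (fun r : ℝ => (Real.log r)⁻¹) (𝓝[>] 0) (𝓝 0) := by
    have h1 : Tendsto (fun r : ℝ => -Real.log r) (𝓝[>] 0) atTop :=
      tendsto_neg_atBot_atTop.comp Real.tendsto_log_nhdsGT_zero
    have h2 := h1.inv_tendsto_atTop
    have h3 := h2.neg
    simp only [Pi.inv_apply, inv_neg, neg_neg, neg_zero] at h3
    exact h3
  have hfac : Tendsto (fun r : ℝ => c * Real.log (2*r) / Real.log r) (𝓝[>] 0) (𝓝 c) := by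
    have base : Tendsto (fun r : ℝ => c * (Real.log 2 * (Real.log r)⁻¹ + 1)) (𝓝[>] 0)
        (𝓝 (c * (Real.log 2 * 0 + 1))) :=
      tendsto_const_nhds.mul ((tendsto_const_nhds.mul hloginv).add tendsto_const_nhds)
    have : c * (Real.log 2 * 0 + 1) = c := by ring
    rw [this] at base
    refine base.congr' ?_
    filter_upwards [hmem] with r hr
    have hr0 : (0:ℝ) < r := hr.1
    have hlogr : Real.log r ≠ 0 := (Real.log_neg hr0 (by linarith [hr.2])).ne
    rw [Real.log_mul two_ne_zero hr0.ne']
    field_simp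
  set L : ℝ → ℝ := fun r =>
    (Real.log (C (2*r)).toReal / (c * Real.log (2*r))) * (c * Real.log (2*r) / Real.log r)
      with hLdef
  have hL : Tendsto L (𝓝[>] 0) (𝓝 (c * D)) := by
    have h := (hD.comp h2r).mul hfac
    rw [show D * c = c * D from mul_comm D c] at h
    exact h
  -- squeeze
  refine tendsto_of_tendsto_of_tendsto_of_le_of_le' hL hU ?_ ?_
  · -- L r ≤ log (T r).toReal / log r
    filter_upwards [hmem] with r hr
    have hr0 : (0:ℝ) < r := hr.1
    have hr1 : r < 1/2 := hr.2
    have hlogr : Real.log r < 0 := Real.log_neg hr0 (by linarith)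
    have hlog2r : Real.log (2*r) < 0 := Real.log_neg (by linarith) (by linarith)
    have hLr : L r = Real.log (C (2*r)).toReal / Real.log r := by
      simp only [hLdef]
      exact div_mul_div_cancel₀ (mul_ne_zero hc.ne' hlog2r.ne)
    rw [hLr]
    have hTpos : 0 < (T r).toReal :=
      ENNReal.toReal_pos ((hCpos r hr0).trans_le (hCT r hr0)).ne' (hTtop r)
    have hle : (T r).toReal ≤ (C (2*r)).toReal :=
      ENNReal.toReal_mono (hCtop _) (hTC r hr0)
    have hlog : Real.log (T r).toReal ≤ Real.log (C (2*r)).toReal :=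
      Real.log_le_log hTpos hle
    rw [div_eq_mul_inv, div_eq_mul_inv]
    exact mul_le_mul_of_nonpos_right hlog (inv_nonpos.2 hlogr.le)
  · -- log (T r).toReal / log r ≤ U r
    filter_upwards [hmem] with r hr
    have hr0 : (0:ℝ) < r := hr.1
    have hlogr : Real.log r < 0 := Real.log_neg hr0 (by linarith [hr.2])
    have hUr : U r = Real.log (C r).toReal / Real.log r := by
      simp only [hUdef]
      rw [mul_div_assoc']
      exact mul_div_mul_left _ _ hc.ne'
    rw [hUr]
    have hCp : 0 < (C r).toReal := ENNReal.toReal_pos (hCpos r hr0).ne' (hCtop r)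
    have hle : (C r).toReal ≤ (T r).toReal := ENNReal.toReal_mono (hTtop _) (hCT r hr0)
    have hlog : Real.log (C r).toReal ≤ Real.log (T r).toReal := Real.log_le_log hCp hle
    rw [div_eq_mul_inv, div_eq_mul_inv]
    exact mul_le_mul_of_nonpos_right hlog (inv_nonpos.2 hlogr.le)

/-- If the generalized dimension of order `q` of the image measure
`μ_f = f_*μ` exists and equals `D`, then the product measure of the matching set of
radius `r` scales as `r^{(q-1)D}` as `r → 0`. -/
theorem matching_observations_scaling
    {M : Type*} [MetricSpace M] [MeasurableSpace M] [BorelSpace M]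
    (μ : Measure M) [IsProbabilityMeasure μ]
    (m : ℕ) (hm : 1 ≤ m)
    (f : M → EuclideanSpace ℝ (Fin m)) (hf : Measurable f)
    (q : ℕ) (hq : 2 ≤ q) (D : ℝ)
    (hD : Tendsto
      (fun r : ℝ =>
        Real.log (∫⁻ y, ((μ.map f) (Metric.ball y r)) ^ (q - 1) ∂(μ.map f)).toReal /
          (((q : ℝ) - 1) * Real.log r))
      (𝓝[>] 0) (𝓝 D)) :
    Tendsto
      (fun r : ℝ =>
        Real.log ((Measure.pi fun _ : Fin q => μ)
            {x : Fin q → M | ∀ j : Fin q, j ≠ ⟨0, by omega⟩ →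
              dist (f (x j)) (f (x ⟨0, by omega⟩)) ≤ r}).toReal /
          Real.log r)
      (𝓝[>] 0) (𝓝 (((q : ℝ) - 1) * D)) := by
  obtain ⟨n, rfl⟩ : ∃ n, q = n + 1 := ⟨q - 1, by omega⟩
  have hn : n ≠ 0 := by omega
  have hνp : IsProbabilityMeasure (μ.map f) := Measure.isProbabilityMeasure_map hf.aemeasurable
  set ν := μ.map f with hν
  -- correlation integrals
  have hT1 : ∀ r : ℝ, (∫⁻ y, (ν (closedBall y r)) ^ n ∂ν) ≤ 1 := by
    intro r
    calc (∫⁻ y, (ν (closedBall y r)) ^ n ∂ν) ≤ ∫⁻ _, 1 ∂ν :=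
          lintegral_mono fun y => pow_le_one' prob_le_one n
      _ = 1 := by simp
  have hC1 : ∀ r : ℝ, (∫⁻ y, (ν (ball y r)) ^ n ∂ν) ≤ 1 := by
    intro r
    calc (∫⁻ y, (ν (ball y r)) ^ n ∂ν) ≤ ∫⁻ _, 1 ∂ν :=
          lintegral_mono fun y => pow_le_one' prob_le_one n
      _ = 1 := by simp
  have hCT : ∀ r : ℝ, 0 < r →
      (∫⁻ y, (ν (ball y r)) ^ n ∂ν) ≤ ∫⁻ y, (ν (closedBall y r)) ^ n ∂ν := fun r _ =>
    lintegral_mono fun y => pow_le_pow_left' (measure_mono ball_subset_closedBall) n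
  have hTC : ∀ r : ℝ, 0 < r →
      (∫⁻ y, (ν (closedBall y r)) ^ n ∂ν) ≤ ∫⁻ y, (ν (ball y (2*r))) ^ n ∂ν := fun r hr =>
    lintegral_mono fun y =>
      pow_le_pow_left' (measure_mono (closedBall_subset_ball (by linarith))) n
  have hCpos : ∀ r : ℝ, 0 < r → 0 < ∫⁻ y, (ν (ball y r)) ^ n ∂ν := fun r hr =>
    Cpos_aux ν n hr
  have key := squeeze_aux (((n+1 : ℕ) : ℝ) - 1) (by
      have h1 : (1:ℝ) ≤ (n:ℝ) := by exact_mod_cast Nat.one_le_iff_ne_zero.mpr hn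
      push_cast; linarith)
    (fun r => ∫⁻ y, (ν (ball y r)) ^ n ∂ν)
    (fun r => ∫⁻ y, (ν (closedBall y r)) ^ n ∂ν) D
    hCpos hC1 hT1 hCT hTC (by exact hD)
  refine key.congr fun r => ?_
  rw [hν, matching_set_eq_integral μ f hf n r]
end

section
/- Let T : [0,1] → [0,1] be the doubling map Tx = 2x mod 1, and let f : [0,1] → ℝ be defined by f(x) = 2x for 0 ≤ x ≤ 1/2 and f(x) = 3/2 − x for 1/2 < x ≤ 1. Then for Lebesgue-almost every x ∈ [0,1], the set A₀(x) = { y ∈ [0,1] : f(y) = f(x) and f(Ty) = f(Tx) } equals the singleton {x}. -/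
open MeasureTheory Set Filter Topology

/-- The doubling map `T x = 2x mod 1` on `[0,1]`. -/
noncomputable def doublingMap : ℝ → ℝ := fun x => Int.fract (2 * x)

/-- The observation `f(x) = 2x` on `[0,1/2]`, `f(x) = 3/2 - x` on `(1/2,1]`. -/
noncomputable def obsF : ℝ → ℝ := fun x => if x ≤ 1/2 then 2 * x else 3/2 - x

lemma fract_self' {a : ℝ} (h0 : 0 ≤ a) (h1 : a < 1) : Int.fract a = a :=
  Int.fract_eq_self.2 ⟨h0, h1⟩

lemma fract_sub_one (a : ℝ) (h0 : 1 ≤ a) (h1 : a < 2) : Int.fract a = a - 1 := by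
  have h := Int.fract_sub_intCast a 1
  push_cast at h
  rw [← h]
  exact fract_self' (by linarith) (by linarith)

lemma fract_two : Int.fract (2 : ℝ) = 0 := by
  have : (2:ℝ) = ((2:ℤ):ℝ) := by norm_num
  rw [this, Int.fract_intCast]

lemma key {x : ℝ} (hx : x ∈ Set.Icc (0:ℝ) 1) (h1 : x ≠ 1/3) (h2 : x ≠ 5/12)
    (h3 : x ≠ 2/3) (h4 : x ≠ 5/6) :
    {y ∈ Set.Icc (0:ℝ) 1 |
      obsF y = obsF x ∧ obsF (doublingMap y) = obsF (doublingMap x)} = {x} := by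
  obtain ⟨hx0, hx1⟩ := hx
  ext y
  simp only [Set.mem_setOf_eq, Set.mem_singleton_iff, Set.mem_Icc]
  constructor
  · rintro ⟨⟨hy0, hy1⟩, hf, hTf⟩
    by_cases hyh : y ≤ 1/2 <;> by_cases hxh : x ≤ 1/2
    · unfold obsF at hf; rw [if_pos hyh, if_pos hxh] at hf; linarith
    · -- y ≤ 1/2 < x
      push_neg at hxh
      exfalso
      unfold obsF at hf
      rw [if_pos hyh, if_neg (not_le.2 hxh)] at hf
      rcases hx1.lt_or_eq with hx1' | hx1'
      · have hTy : doublingMap y = 3/2 - x := by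
          unfold doublingMap; rw [hf]; exact fract_self' (by linarith) (by linarith)
        have hTx : doublingMap x = 2*x - 1 := by
          unfold doublingMap; exact fract_sub_one _ (by linarith) (by linarith)
        rw [hTy, hTx] at hTf
        unfold obsF at hTf
        rw [if_neg (by linarith : ¬ (3/2 - x ≤ 1/2))] at hTf
        by_cases h : 2*x - 1 ≤ 1/2
        · rw [if_pos h] at hTf; exact h3 (by linarith)
        · rw [if_neg h] at hTf; exact h4 (by linarith)
      · subst hx1'
        have hy2 : 2*y = 1/2 := by linarith
        have hTy : doublingMap y = 1/2 := by
          unfold doublingMap; rw [hy2]; exact fract_self' (by norm_num) (by norm_num)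
        have hTx : doublingMap 1 = 0 := by
          unfold doublingMap; rw [(by norm_num : (2:ℝ)*1 = 2), fract_two]
        rw [hTy, hTx] at hTf
        unfold obsF at hTf
        norm_num at hTf
    · -- x ≤ 1/2 < y
      push_neg at hyh
      exfalso
      unfold obsF at hf
      rw [if_neg (not_le.2 hyh), if_pos hxh] at hf
      rcases hy1.lt_or_eq with hy1' | hy1'
      · have hTy : doublingMap y = 2*y - 1 := by
          unfold doublingMap; exact fract_sub_one _ (by linarith) (by linarith)
        have hTx : doublingMap x = 3/2 - y := by
          unfold doublingMap; rw [← hf]; exact fract_self' (by linarith) (by linarith)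
        rw [hTy, hTx] at hTf
        unfold obsF at hTf
        rw [if_neg (by linarith : ¬ (3/2 - y ≤ 1/2))] at hTf
        by_cases h : 2*y - 1 ≤ 1/2
        · rw [if_pos h] at hTf; exact h2 (by linarith)
        · rw [if_neg h] at hTf; exact h1 (by linarith)
      · subst hy1'
        have hx2 : 2*x = 1/2 := by linarith
        have hTy : doublingMap 1 = 0 := by
          unfold doublingMap; rw [(by norm_num : (2:ℝ)*1 = 2), fract_two]
        have hTx : doublingMap x = 1/2 := by
          unfold doublingMap; rw [hx2]; exact fract_self' (by norm_num) (by norm_num)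
        rw [hTy, hTx] at hTf
        unfold obsF at hTf
        norm_num at hTf
    · unfold obsF at hf; rw [if_neg hyh, if_neg hxh] at hf; linarith
  · rintro rfl; exact ⟨⟨hx0, hx1⟩, rfl, rfl⟩

/-- For the doubling map and the above observation, for Lebesgue-a.e.
`x ∈ [0,1]` the set `A₀(x) = {y ∈ [0,1] : f(y) = f(x) ∧ f(Ty) = f(Tx)}` is `{x}`. -/
theorem doubling_A0_singleton :
    ∀ᵐ x ∂(volume.restrict (Set.Icc (0:ℝ) 1)),
      {y ∈ Set.Icc (0:ℝ) 1 |
        obsF y = obsF x ∧ obsF (doublingMap y) = obsF (doublingMap x)} = {x} := by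
  have hS : volume ({1/3, 5/12, 2/3, 5/6} : Set ℝ) = 0 :=
    (Set.toFinite _).measure_zero _
  have hmem : ∀ᵐ x ∂(volume.restrict (Set.Icc (0:ℝ) 1)), x ∈ Set.Icc (0:ℝ) 1 :=
    ae_restrict_mem measurableSet_Icc
  have hnot : ∀ᵐ x ∂(volume.restrict (Set.Icc (0:ℝ) 1)),
      x ∉ ({1/3, 5/12, 2/3, 5/6} : Set ℝ) := by
    exact ae_restrict_of_ae (measure_eq_zero_iff_ae_notMem.mp hS)
  filter_upwards [hmem, hnot] with x hx hxS
  simp only [Set.mem_insert_iff, Set.mem_singleton_iff, not_or] at hxS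
  exact key hx hxS.1 hxS.2.1 hxS.2.2.1 hxS.2.2.2
end

section
/- Let T : [0,1] → [0,1] be the doubling map Tx = 2x mod 1, and let f : [0,1] → ℝ be defined by f(x) = 2x for 0 ≤ x ≤ 1/2 and f(x) = 3/2 − x for 1/2 < x ≤ 1. Then for every integer k ≥ 1 and Lebesgue-almost every x ∈ [0,1], the set A_k(x) = { y ∈ [0,1] : f(y) = f(x), f(T^i y) ≠ f(T^i x) for i = 1,…,k, and f(T^{k+1} y) = f(T^{k+1} x) } is empty. -/
open MeasureTheory Set Filter Topology

lemma fract_two_mul_fract (z : ℝ) : Int.fract (2 * Int.fract z) = Int.fract (2 * z) := by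
  have h : 2 * Int.fract z = 2 * z - ((2 * ⌊z⌋ : ℤ) : ℝ) := by
    rw [Int.fract]; push_cast; ring
  rw [h, Int.fract_sub_intCast]

lemma iter_doubling (x : ℝ) (n : ℕ) :
    doublingMap^[n+1] x = Int.fract (2^(n+1) * x) := by
  induction n with
  | zero => simp [doublingMap]
  | succ n ih =>
      rw [Function.iterate_succ_apply', ih]
      show Int.fract (2 * Int.fract (2^(n+1) * x)) = _
      rw [fract_two_mul_fract]
      congr 1
      ring

lemma six_fract (c : ℝ) (h : ∀ m : ℤ, 6 * c ≠ (m:ℝ)) :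
    ∀ m : ℤ, 6 * Int.fract c ≠ (m:ℝ) := by
  intro m hm
  apply h (m + 6 * ⌊c⌋)
  have : Int.fract c = c - ⌊c⌋ := rfl
  rw [this] at hm
  push_cast
  linarith

lemma keyC1 (c : ℝ) (h : ∀ m : ℤ, 6 * c ≠ (m:ℝ)) :
    obsF (Int.fract (-c)) ≠ obsF (Int.fract (2*c)) := by
  have h6 := six_fract c h
  set s := Int.fract c with hs
  have hs0 : 0 ≤ s := Int.fract_nonneg c
  have hs1 : s < 1 := Int.fract_lt_one c
  have hsne : s ≠ 0 := fun e => h6 0 (by rw [e]; simp)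
  have hneg : Int.fract (-c) = 1 - s := Int.fract_neg hsne
  have h2 : Int.fract (2*c) = Int.fract (2*s) := by
    have e : 2*c = 2*s + ((2*⌊c⌋:ℤ):ℝ) := by
      rw [hs, Int.fract]; push_cast; ring
    rw [e, Int.fract_add_intCast]
  have hhalf : s ≠ 1/2 := fun e => h6 3 (by rw [e]; norm_num)
  rw [hneg, h2]
  rcases lt_or_gt_of_ne hhalf with hlt | hgt
  · have e : Int.fract (2*s) = 2*s := Int.fract_eq_self.mpr ⟨by linarith, by linarith⟩
    rw [e]
    unfold obsF
    intro hEq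
    split_ifs at hEq with h1 h2'
    · linarith
    · linarith
    · exact h6 1 (by push_cast; linarith)
    · exact h6 2 (by push_cast; linarith)
  · have e : Int.fract (2*s) = 2*s - 1 := by
      have : (2:ℝ)*s - 1 = 2*s - ((1:ℤ):ℝ) := by norm_num
      rw [show (2:ℝ)*s = (2*s - ((1:ℤ):ℝ)) + ((1:ℤ):ℝ) by ring, Int.fract_add_intCast,
        Int.fract_eq_self.mpr ⟨by push_cast; linarith, by push_cast; linarith⟩]
      push_cast; ring
    rw [e]
    unfold obsF
    intro hEq
    split_ifs at hEq with h1 h2'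
    · exact h6 4 (by push_cast; linarith)
    · linarith
    · linarith
    · linarith

lemma keyC2 (c : ℝ) (h : ∀ m : ℤ, 6 * c ≠ (m:ℝ)) :
    obsF (Int.fract (-(2*c))) ≠ obsF (Int.fract c) := by
  have h6 := six_fract c h
  set t := Int.fract c with ht
  have ht0 : 0 ≤ t := Int.fract_nonneg c
  have ht1 : t < 1 := Int.fract_lt_one c
  have htne : t ≠ 0 := fun e => h6 0 (by rw [e]; simp)
  have hhalf : t ≠ 1/2 := fun e => h6 3 (by rw [e]; norm_num)
  have hneg : Int.fract (-(2*c)) = Int.fract (-(2*t)) := by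
    have e : -(2*c) = -(2*t) + ((-(2*⌊c⌋):ℤ):ℝ) := by
      rw [ht, Int.fract]; push_cast; ring
    rw [e, Int.fract_add_intCast]
  rw [hneg]
  rcases lt_or_gt_of_ne hhalf with hlt | hgt
  · have e : Int.fract (-(2*t)) = 1 - 2*t := by
      have htpos : 0 < t := lt_of_le_of_ne ht0 (Ne.symm htne)
      rw [show -(2*t) = (1 - 2*t) + ((-1:ℤ):ℝ) by push_cast; ring, Int.fract_add_intCast,
        Int.fract_eq_self.mpr ⟨by linarith, by linarith⟩]
    rw [e]
    unfold obsF
    intro hEq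
    split_ifs at hEq with h1 h2'
    · exact h6 2 (by push_cast; linarith)
    · linarith
    · linarith
    · linarith
  · have e : Int.fract (-(2*t)) = 2 - 2*t := by
      rw [show -(2*t) = (2 - 2*t) + ((-2:ℤ):ℝ) by push_cast; ring, Int.fract_add_intCast,
        Int.fract_eq_self.mpr ⟨by linarith, by linarith⟩]
    rw [e]
    unfold obsF
    intro hEq
    split_ifs at hEq with h1 h2'
    · linarith
    · exact h6 5 (by push_cast; linarith)
    · linarith
    · exact h6 4 (by push_cast; linarith)

lemma obs_eq_cases {a b : ℝ} (h : obsF a = obsF b) :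
    a = b ∨ 2*a = 3/2 - b ∨ 2*b = 3/2 - a := by
  unfold obsF at h
  split_ifs at h
  · left; linarith
  · right; left; linarith
  · right; right; linarith
  · left; linarith

/-- For the doubling map and the above observation, for every `k ≥ 1`
and Lebesgue-a.e. `x ∈ [0,1]`, the set
`A_k(x) = {y ∈ [0,1] : f(y) = f(x), f(Tⁱy) ≠ f(Tⁱx) for i = 1,…,k, f(T^{k+1}y) = f(T^{k+1}x)}`
is empty. -/
theorem doubling_Ak_empty (k : ℕ) (hk : 1 ≤ k) :
    ∀ᵐ x ∂(volume.restrict (Set.Icc (0:ℝ) 1)),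
      {y ∈ Set.Icc (0:ℝ) 1 |
        obsF y = obsF x ∧
        (∀ i, 1 ≤ i → i ≤ k → obsF (doublingMap^[i] y) ≠ obsF (doublingMap^[i] x)) ∧
        obsF (doublingMap^[k+1] y) = obsF (doublingMap^[k+1] x)} = (∅ : Set ℝ) := by
  set B : Set ℝ := {x : ℝ | ∃ n : ℕ, ∃ m : ℤ, 6 * 2^n * x = (m:ℝ)} with hBdef
  have hBc : B.Countable := by
    have hsub : B ⊆ Set.range (fun p : ℕ × ℤ => (p.2:ℝ)/(6*2^p.1)) := by
      rintro x ⟨n, m, hx⟩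
      exact ⟨(n, m), by field_simp; linarith⟩
    exact (Set.countable_range _).mono hsub
  have hB0 : volume B = 0 := hBc.measure_zero _
  have hae : ∀ᵐ x ∂(volume.restrict (Set.Icc (0:ℝ) 1)), x ∉ B := by
    exact ae_restrict_of_ae (measure_eq_zero_iff_ae_notMem.mp hB0)
  filter_upwards [hae] with x hx
  rw [Set.eq_empty_iff_forall_notMem]
  rintro y ⟨hyI, h0, hne, hk1⟩
  have hgood : ∀ n : ℕ, ∀ m : ℤ, 6 * 2^n * x ≠ (m:ℝ) := by
    intro n m hnm
    exact hx ⟨n, m, hnm⟩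
  obtain ⟨j, rfl⟩ : ∃ j, k = j + 1 := ⟨k - 1, (Nat.succ_pred_eq_of_pos hk).symm⟩
  rcases obs_eq_cases h0 with heq | hy2 | hx2
  · exact hne 1 le_rfl hk (by rw [heq])
  · -- 2y = 3/2 - x
    have e1 : doublingMap^[j+1+1] y = Int.fract (-(2^(j+1) * x)) := by
      rw [iter_doubling]
      have hy : y = 3/4 - x/2 := by linarith
      rw [show (2:ℝ)^(j+1+1) * y = -(2^(j+1) * x) + ((3 * 2^j : ℤ):ℝ) by
        rw [hy]; push_cast; ring]
      rw [Int.fract_add_intCast]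
    have e2 : doublingMap^[j+1+1] x = Int.fract (2 * (2^(j+1) * x)) := by
      rw [iter_doubling]
      congr 1
      ring
    have h6 : ∀ m : ℤ, 6 * (2^(j+1) * x) ≠ (m:ℝ) := by
      intro m hm
      exact hgood (j+1) m (by rw [← hm]; ring)
    exact keyC1 _ h6 (by rw [← e1, ← e2]; exact hk1)
  · -- 2x = 3/2 - y
    have e1 : doublingMap^[j+1+1] y = Int.fract (-(2 * (2^(j+1+1) * x))) := by
      rw [iter_doubling]
      have hy : y = 3/2 - 2*x := by linarith
      rw [show (2:ℝ)^(j+1+1) * y = -(2 * (2^(j+1+1) * x)) + ((3 * 2^(j+1) : ℤ):ℝ) by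
        rw [hy]; push_cast; ring]
      rw [Int.fract_add_intCast]
    have e2 : doublingMap^[j+1+1] x = Int.fract (2^(j+1+1) * x) := iter_doubling x (j+1)
    have h6 : ∀ m : ℤ, 6 * (2^(j+1+1) * x) ≠ (m:ℝ) := by
      intro m hm
      exact hgood (j+1+1) m (by rw [← hm]; ring)
    exact keyC2 _ h6 (by rw [← e1, ← e2]; exact hk1)
end
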